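/- arXiv:2605.11156 — 2 statements merged into one kernel-verified Lean document; each statement's English description precedes it below -/
import Mathlib

section
/- In the polynomial ring k[z, w, u, v, u', v'] over a field k, the two elements u·z − u'·w and v·z − v'·w form a regular sequence. -/
/-!
As a polynomial in `z`, `u·z − u'·w` is linear with relatively prime coefficients `u` and
`u'·w`, hence irreducible, hence prime in the factorial ring `k[z, w, u, v, u', v']`. So it is a
nonzerodivisor, and `v·z − v'·w` is a nonzerodivisor modulo it as soon as it is not a multiple of
it, which a specialisation killing `u` and `u'` but not `v·z` shows.
-/

open MvPolynomial

namespace MvPolynomial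

variable {R : Type*} [CommRing R] [IsDomain R]

theorem isRelPrime_X_X {σ : Type*} {i j : σ} (h : i ≠ j) :
    IsRelPrime (X i : MvPolynomial σ R) (X j) :=
  X_prime.irreducible.isRelPrime_iff_not_dvd.mpr (X_dvd_X.not.mpr h)

theorem prime_X_succ_mul_X_zero_sub_X_succ_mul_X_succ [UniqueFactorizationMonoid R] {n : ℕ}
    {i j l : Fin n} (hj : i ≠ j) (hl : i ≠ l) :
    Prime (X i.succ * X 0 - X j.succ * X l.succ : MvPolynomial (Fin (n + 1)) R) := by
  have hirr : Irreducible (Polynomial.C (X i) * Polynomial.X + Polynomial.C (-(X j * X l)) :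
      Polynomial (MvPolynomial (Fin n) R)) :=
    Polynomial.irreducible_C_mul_X_add_C (X_ne_zero i)
      ((isRelPrime_X_X hj).mul_right (isRelPrime_X_X hl)).neg_right
  rw [← MulEquiv.prime_iff (finSuccEquiv R n)]
  convert hirr.prime using 1
  simp only [map_sub, map_mul, finSuccEquiv_X_succ, finSuccEquiv_X_zero, map_neg]
  ring

end MvPolynomial

/-- In `k[z, w, u, v, u', v']` (variables indexed `0,…,5` as
`z, w, u, v, u', v'`), the elements `u·z − u'·w` and `v·z − v'·w` form a regular
sequence: the first is a nonzerodivisor, and the second is a nonzerodivisor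
modulo the ideal generated by the first. -/
theorem regular_sequence_in_sixvar_polynomial_ring (k : Type*) [Field k] :
    (∀ x : MvPolynomial (Fin 6) k,
      (X 2 * X 0 - X 4 * X 1) * x = 0 → x = 0) ∧
    (∀ x : MvPolynomial (Fin 6) k,
      (X 3 * X 0 - X 5 * X 1) * x ∈
          Ideal.span ({X 2 * X 0 - X 4 * X 1} : Set (MvPolynomial (Fin 6) k)) →
        x ∈ Ideal.span ({X 2 * X 0 - X 4 * X 1} : Set (MvPolynomial (Fin 6) k))) := by
  have hprime : Prime (X 2 * X 0 - X 4 * X 1 : MvPolynomial (Fin 6) k) :=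
    prime_X_succ_mul_X_zero_sub_X_succ_mul_X_succ (i := 1) (j := 3) (l := 0)
      (by decide) (by decide)
  have hndvd : ¬ (X 2 * X 0 - X 4 * X 1 : MvPolynomial (Fin 6) k) ∣ X 3 * X 0 - X 5 * X 1 :=
    fun h => by simpa using map_dvd (eval ![1, 0, 0, 1, 0, 0]) h
  refine ⟨fun x hx => (mul_eq_zero.mp hx).resolve_left hprime.ne_zero, fun x hx => ?_⟩
  rw [Ideal.mem_span_singleton] at hx ⊢
  exact (hprime.dvd_or_dvd hx).resolve_left hndvd
end

section
/- In the polynomial ring k[x, y, z, w] over a field k, the element x·y − z·w is prime (equivalently, irreducible), so the quotient k[x, y, z, w]/(x·y − z·w) is an integral domain. -/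
/-!
Eliminating the variable `x` via `k[x, y, z, w] ≃ k[y, z, w][x]`, the element becomes the
linear polynomial `y·x − z·w` over the UFD `k[y, z, w]`. Its coefficients `y` and `z·w` are
relatively prime since the prime `y` divides neither `z` nor `w`, and a degree-one polynomial
with relatively prime coefficients is irreducible, hence prime because `k[y, z, w][x]` is a UFD.
-/

open MvPolynomial

theorem Polynomial.prime_C_mul_X_sub_C {R : Type*} [CommRing R] [IsDomain R]
    [UniqueFactorizationMonoid R] {a b : R} (ha : a ≠ 0) (hab : IsRelPrime a b) :
    Prime (Polynomial.C a * Polynomial.X - Polynomial.C b) := by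
  rw [sub_eq_add_neg, ← Polynomial.C_neg]
  exact UniqueFactorizationMonoid.irreducible_iff_prime.mp <|
    Polynomial.irreducible_C_mul_X_add_C ha fun d hda hdb => hab hda (dvd_neg.mp hdb)

theorem MvPolynomial.isRelPrime_X_X_mul_X {σ R : Type*} [CommRing R] [IsDomain R]
    {i j l : σ} (hj : i ≠ j) (hl : i ≠ l) :
    IsRelPrime (X i : MvPolynomial σ R) (X j * X l) := by
  rw [X_prime.irreducible.isRelPrime_iff_not_dvd, X_prime.dvd_mul, X_dvd_X, X_dvd_X]
  exact not_or.mpr ⟨hj, hl⟩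

theorem MvPolynomial.prime_X_zero_mul_X_succ_sub_X_succ_mul_X_succ {R : Type*} [CommRing R]
    [IsDomain R] [UniqueFactorizationMonoid R] {n : ℕ} {i j l : Fin n} (hj : i ≠ j)
    (hl : i ≠ l) :
    Prime (X 0 * X i.succ - X j.succ * X l.succ : MvPolynomial (Fin (n + 1)) R) := by
  have himage : finSuccEquiv R n (X 0 * X i.succ - X j.succ * X l.succ) =
      Polynomial.C (X i) * Polynomial.X - Polynomial.C (X j * X l) := by
    simp only [map_sub, map_mul, finSuccEquiv_X_zero, finSuccEquiv_X_succ]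
    ring
  rw [← MulEquiv.prime_iff (finSuccEquiv R n).toMulEquiv]
  change Prime (finSuccEquiv R n _)
  rw [himage]
  exact Polynomial.prime_C_mul_X_sub_C (X_ne_zero i) (isRelPrime_X_X_mul_X hj hl)

/-- In `k[x, y, z, w]`, the element `x·y − z·w` is prime, so the
quotient `k[x, y, z, w]/(x·y − z·w)` is an integral domain. -/
theorem xy_sub_zw_prime (k : Type*) [Field k] :
    Prime ((X 0 * X 1 - X 2 * X 3 : MvPolynomial (Fin 4) k)) ∧
    IsDomain (MvPolynomial (Fin 4) k ⧸
      Ideal.span ({X 0 * X 1 - X 2 * X 3} : Set (MvPolynomial (Fin 4) k))) := by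
  have hprime : Prime ((X 0 * X 1 - X 2 * X 3 : MvPolynomial (Fin 4) k)) :=
    prime_X_zero_mul_X_succ_sub_X_succ_mul_X_succ (i := 0) (j := 1) (l := 2)
      (by decide) (by decide)
  have := (Ideal.span_singleton_prime hprime.ne_zero).mpr hprime
  exact ⟨hprime, Ideal.Quotient.isDomain _⟩
end
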